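/- Let 𝒫 ⊆ 𝒜_u(B_{ℓ₂}) be the subalgebra generated by the constant functions and the restrictions to B_{ℓ₂} of continuous linear functionals on ℓ₂ (the finite type polynomials). If f ∈ 𝒜_u(B_{ℓ₂}) lies in the sup-norm closure of 𝒫, then for every Φ ∈ ℳ_{u,∞}(B_{ℓ₂},B_{ℓ₂}) one has Φ(f) = C_{ξ(Φ)}(f), i.e. Φ(f)(x) = f̃(ξ(Φ)(x)) for all x ∈ B_{ℓ₂}; consequently, for every g in the closed unit ball of ℋ^∞(B_{ℓ₂},ℓ₂), the cluster set satisfies 𝒞ℓ(f,g) = {C_g(f)}. -/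

import Mathlib

open Metric Set Filter

noncomputable section

/-- `ℓ2` is the complex Hilbert space of square-summable sequences indexed by `ℕ`. -/
abbrev ℓ2 : Type := lp (fun _ : ℕ => ℂ) 2

/-- The open unit ball of `ℓ2`. -/
def oB : Set ℓ2 := Metric.ball 0 1

/-- The closed unit ball of `ℓ2`. -/
def cB : Set ℓ2 := Metric.closedBall 0 1

/-- The unit sphere of `ℓ2`. -/
def sph : Set ℓ2 := Metric.sphere 0 1

/-- The coordinate functional `x ↦ ⟨x, eₙ⟩ = xₙ` (inner product linear in the first variable). -/
def coord (n : ℕ) : ℓ2 → ℂ := fun x => x n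

/-- Supremum norm on the open unit ball, for scalar-valued functions. -/
def supNorm (f : ℓ2 → ℂ) : ℝ := ⨆ x : oB, ‖f (x : ℓ2)‖

/-- Supremum norm on the open unit ball, for `ℓ2`-valued functions. -/
def supNormV (g : ℓ2 → ℓ2) : ℝ := ⨆ x : oB, ‖g (x : ℓ2)‖

/-- Membership in `𝒜ᵤ(B)`: holomorphic on the open unit ball and uniformly continuous there. -/
def MemAu (f : ℓ2 → ℂ) : Prop :=
  DifferentiableOn ℂ f oB ∧ UniformContinuousOn f oB

/-- Membership in `ℋ^∞(B)`: holomorphic and bounded on the open unit ball. -/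
def MemHinf (f : ℓ2 → ℂ) : Prop :=
  DifferentiableOn ℂ f oB ∧ ∃ C, ∀ x ∈ oB, ‖f x‖ ≤ C

/-- Membership in `ℋ^∞(B,ℓ2)`: holomorphic and bounded on the open unit ball, `ℓ2`-valued. -/
def MemHinfV (g : ℓ2 → ℓ2) : Prop :=
  DifferentiableOn ℂ g oB ∧ ∃ C, ∀ x ∈ oB, ‖g x‖ ≤ C

/-- `fext` is (a representative of) the unique continuous extension `f̃` of `f` to the
closed unit ball. -/
def IsExt (f fext : ℓ2 → ℂ) : Prop :=
  ContinuousOn fext cB ∧ Set.EqOn fext f oB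

/-- An element of the scalar-valued spectrum `ℳᵤ(B)`: a nonzero continuous `ℂ`-algebra
homomorphism `𝒜ᵤ(B) → ℂ`, encoded as a map on representatives. -/
structure MuHom where
  toFun : (ℓ2 → ℂ) → ℂ
  map_add : ∀ f g, MemAu f → MemAu g → toFun (f + g) = toFun f + toFun g
  map_mul : ∀ f g, MemAu f → MemAu g → toFun (f * g) = toFun f * toFun g
  map_smul : ∀ (c : ℂ) (f), MemAu f → toFun (c • f) = c * toFun f
  respects : ∀ f g, MemAu f → MemAu g → Set.EqOn f g oB → toFun f = toFun g
  nonzero : ∃ f, MemAu f ∧ toFun f ≠ 0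
  cont : ∃ C, ∀ f, MemAu f → ‖toFun f‖ ≤ C * supNorm f

/-- An element of the vector-valued spectrum `ℳ_{u,∞}(B,B)`: a nonzero continuous `ℂ`-algebra
homomorphism `𝒜ᵤ(B) → ℋ^∞(B)`, encoded as a map on representatives. -/
structure MuInfHom where
  toFun : (ℓ2 → ℂ) → (ℓ2 → ℂ)
  maps_mem : ∀ f, MemAu f → MemHinf (toFun f)
  map_add : ∀ f g, MemAu f → MemAu g → ∀ x ∈ oB, toFun (f + g) x = toFun f x + toFun g x
  map_mul : ∀ f g, MemAu f → MemAu g → ∀ x ∈ oB, toFun (f * g) x = toFun f x * toFun g x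
  map_smul : ∀ (c : ℂ) (f), MemAu f → ∀ x ∈ oB, toFun (c • f) x = c * toFun f x
  respects : ∀ f g, MemAu f → MemAu g → Set.EqOn f g oB → Set.EqOn (toFun f) (toFun g) oB
  nonzero : ∃ f, MemAu f ∧ ∃ x ∈ oB, toFun f x ≠ 0
  cont : ∃ C, ∀ f, MemAu f → ∀ x ∈ oB, ‖toFun f x‖ ≤ C * supNorm f

/-- An element of the scalar-valued spectrum `ℳ_∞(B)`: a nonzero continuous `ℂ`-algebra
homomorphism `ℋ^∞(B) → ℂ`, encoded as a map on representatives. -/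
structure MInfHom where
  toFun : (ℓ2 → ℂ) → ℂ
  map_add : ∀ f g, MemHinf f → MemHinf g → toFun (f + g) = toFun f + toFun g
  map_mul : ∀ f g, MemHinf f → MemHinf g → toFun (f * g) = toFun f * toFun g
  map_smul : ∀ (c : ℂ) (f), MemHinf f → toFun (c • f) = c * toFun f
  respects : ∀ f g, MemHinf f → MemHinf g → Set.EqOn f g oB → toFun f = toFun g
  nonzero : ∃ f, MemHinf f ∧ toFun f ≠ 0
  cont : ∃ C, ∀ f, MemHinf f → ‖toFun f‖ ≤ C * supNorm f

/-- `ξ(Φ) = g`: the projection of `Φ` is the function `g`, i.e. `Φ(⟨·,eₙ⟩)(x) = g(x)ₙ`. -/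
def xiEq (Φ : MuInfHom) (g : ℓ2 → ℓ2) : Prop :=
  ∀ x ∈ oB, ∀ n : ℕ, Φ.toFun (coord n) x = g x n

/-- `Φ = C_g`: `Φ` is the composition homomorphism `f ↦ f̃ ∘ g`. -/
def IsCompHom (Φ : MuInfHom) (g : ℓ2 → ℓ2) : Prop :=
  ∀ f fext, MemAu f → IsExt f fext → ∀ x ∈ oB, Φ.toFun f x = fext (g x)

/-- The open unit ball of `ℋ^∞(B,ℓ2)`. -/
def ballHV : Set (ℓ2 → ℓ2) := {h | MemHinfV h ∧ supNormV h < 1}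

/-- The open unit ball of `ℋ^∞(B)`. -/
def ballH : Set (ℓ2 → ℂ) := {h | MemHinf h ∧ supNorm h < 1}

/-- `F` is holomorphic on the open unit ball of `ℋ^∞(B,ℓ2)`: it is locally bounded there and
`ℂ`-differentiable along every complex line (which, for maps on a ball of a Banach space, is
equivalent to Fréchet holomorphy). -/
def HolomorphicOnBallHV (F : (ℓ2 → ℓ2) → ℂ) : Prop :=
  (∀ h ∈ ballHV, ∃ ε > 0, ∃ C, ∀ k ∈ ballHV, supNormV (k - h) < ε → ‖F k‖ ≤ C) ∧
  (∀ h ∈ ballHV, ∀ k, MemHinfV k →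
    DifferentiableOn ℂ (fun z : ℂ => F (h + z • k)) {z : ℂ | (h + z • k) ∈ ballHV})

/-- `F` is holomorphic on the open unit ball of `ℋ^∞(B)`: it is locally bounded there and
`ℂ`-differentiable along every complex line. -/
def HolomorphicOnBallH (F : (ℓ2 → ℂ) → ℂ) : Prop :=
  (∀ h ∈ ballH, ∃ ε > 0, ∃ C, ∀ k ∈ ballH, supNorm (k - h) < ε → ‖F k‖ ≤ C) ∧
  (∀ h ∈ ballH, ∀ k, MemHinf k →
    DifferentiableOn ℂ (fun z : ℂ => F (h + z • k)) {z : ℂ | (h + z • k) ∈ ballH})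

/-- `h ∈ 𝒞ℓ(f,g)` (with `fext = f̃` the continuous extension of `f` to the closed ball):
there is a net `(g_α)` in the open unit ball of `ℋ^∞(B,ℓ2)` converging weak-star to `g`
(pointwise weak convergence of values) with `f̃(g_α(y)) → h(y)` for every `y ∈ B`. -/
def InCluster (fext : ℓ2 → ℂ) (g : ℓ2 → ℓ2) (h : ℓ2 → ℂ) : Prop :=
  ∃ (ι : Type) (l : Filter ι), l.NeBot ∧ ∃ gA : ι → ℓ2 → ℓ2,
    (∀ i, gA i ∈ ballHV) ∧
    (∀ y ∈ oB, ∀ u : ℓ2,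
      Filter.Tendsto (fun i => (inner ℂ (gA i y) u : ℂ)) l (nhds (inner ℂ (g y) u))) ∧
    (∀ y ∈ oB, Filter.Tendsto (fun i => fext (gA i y)) l (nhds (h y)))

/-- The subalgebra of finite type polynomials: generated by the constants and the continuous
linear functionals on `ℓ2`. -/
def finTypePolys : Subalgebra ℂ (ℓ2 → ℂ) :=
  Algebra.adjoin ℂ (Set.range (fun φ : ℓ2 →L[ℂ] ℂ => (φ : ℓ2 → ℂ)))

open Topology

/-! ### Basic lemmas -/

lemma mem_oB_iff {x : ℓ2} : x ∈ oB ↔ ‖x‖ < 1 := by simp [oB]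
lemma mem_cB_iff {x : ℓ2} : x ∈ cB ↔ ‖x‖ ≤ 1 := by simp [cB]
lemma zero_mem_oB : (0 : ℓ2) ∈ oB := by simp [oB]
lemma oB_subset_cB : oB ⊆ cB := ball_subset_closedBall
lemma isOpen_oB : IsOpen oB := isOpen_ball
instance : Nonempty oB := ⟨⟨0, zero_mem_oB⟩⟩

lemma norm_le_supNorm {f : ℓ2 → ℂ} (hb : ∃ C, ∀ x ∈ oB, ‖f x‖ ≤ C) {x : ℓ2} (hx : x ∈ oB) :
    ‖f x‖ ≤ supNorm f := by
  obtain ⟨C, hC⟩ := hb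
  exact le_ciSup ⟨C, by rintro _ ⟨z, rfl⟩; exact hC z z.2⟩ (⟨x, hx⟩ : oB)

lemma supNorm_le {f : ℓ2 → ℂ} {C : ℝ} (h : ∀ x ∈ oB, ‖f x‖ ≤ C) : supNorm f ≤ C :=
  ciSup_le fun x => h x x.2

lemma supNorm_nonneg {f : ℓ2 → ℂ} (hb : ∃ C, ∀ x ∈ oB, ‖f x‖ ≤ C) : 0 ≤ supNorm f :=
  (norm_nonneg _).trans (norm_le_supNorm hb zero_mem_oB)

lemma norm_le_supNormV {g : ℓ2 → ℓ2} (hb : ∃ C, ∀ x ∈ oB, ‖g x‖ ≤ C) {x : ℓ2} (hx : x ∈ oB) :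
    ‖g x‖ ≤ supNormV g := by
  obtain ⟨C, hC⟩ := hb
  exact le_ciSup ⟨C, by rintro _ ⟨z, rfl⟩; exact hC z z.2⟩ (⟨x, hx⟩ : oB)

lemma supNormV_le {g : ℓ2 → ℓ2} {C : ℝ} (h : ∀ x ∈ oB, ‖g x‖ ≤ C) : supNormV g ≤ C :=
  ciSup_le fun x => h x x.2

/-- The scaling sequence used to approach points of the closed ball from the open ball. -/
def ck (k : ℕ) : ℝ := 1 - 1 / (k + 2)

lemma ck_mem (k : ℕ) : ck k ∈ Set.Ico (0:ℝ) 1 := by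
  constructor
  · have h2 : (0:ℝ) < (k:ℝ) + 2 := by positivity
    have : 1 / ((k:ℝ) + 2) ≤ 1 := by
      rw [div_le_one h2]; linarith
    simp only [ck]; linarith
  · have h2 : (0:ℝ) < (k:ℝ) + 2 := by positivity
    have : 0 < 1 / ((k:ℝ) + 2) := by positivity
    simp only [ck]; linarith

lemma tendsto_ck : Tendsto ck atTop (𝓝 1) := by
  have h : Tendsto (fun k : ℕ => ((k:ℝ) + 2)) atTop atTop :=
    tendsto_atTop_add_const_right atTop 2 tendsto_natCast_atTop_atTop
  have h0 : Tendsto (fun k : ℕ => 1 / ((k:ℝ) + 2)) atTop (𝓝 0) := by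
    have := h.inv_tendsto_atTop; simp only [one_div]; exact this
  have := (tendsto_const_nhds (x := (1:ℝ))).sub h0
  have hck : ck = fun k : ℕ => 1 - 1 / ((k:ℝ) + 2) := rfl
  rw [hck]
  simpa using this

lemma scale_mem_oB {z : ℓ2} (hz : ‖z‖ ≤ 1) (k : ℕ) : ((ck k : ℂ)) • z ∈ oB := by
  rw [mem_oB_iff, norm_smul]
  have h1 := (ck_mem k).1
  have h2 := (ck_mem k).2
  have : ‖(ck k : ℂ)‖ = ck k := by
    rw [Complex.norm_real, Real.norm_eq_abs, abs_of_nonneg h1]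
  rw [this]
  calc ck k * ‖z‖ ≤ ck k * 1 := by
        apply mul_le_mul_of_nonneg_left hz h1
    _ < 1 := by linarith

lemma tendsto_scale (z : ℓ2) : Tendsto (fun k => ((ck k : ℂ)) • z) atTop (𝓝 z) := by
  have h : Tendsto (fun k => ((ck k : ℝ) : ℂ)) atTop (𝓝 ((1:ℝ):ℂ)) :=
    (Complex.continuous_ofReal.tendsto 1).comp tendsto_ck
  have := h.smul (tendsto_const_nhds (x := z))
  simpa using this

/-- Key extension estimate: if `‖f - q‖ ≤ ε` on the open ball and `q` is continuous, then the
extension satisfies `‖fext - q‖ ≤ ε` on the closed ball. -/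
lemma ext_est {f fext : ℓ2 → ℂ} (hfe : IsExt f fext) {q : ℓ2 → ℂ} (hq : Continuous q) {ε : ℝ}
    (h : ∀ x ∈ oB, ‖f x - q x‖ ≤ ε) : ∀ z ∈ cB, ‖fext z - q z‖ ≤ ε := by
  intro z hz
  have hz1 : ‖z‖ ≤ 1 := mem_cB_iff.mp hz
  have hmem : ∀ k, ((ck k : ℂ)) • z ∈ oB := scale_mem_oB hz1
  have h1 : Tendsto (fun k => fext (((ck k : ℂ)) • z)) atTop (𝓝 (fext z)) := by
    apply (hfe.1 z hz).tendsto.comp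
    apply tendsto_nhdsWithin_of_tendsto_nhds_of_eventually_within _ (tendsto_scale z)
    exact Eventually.of_forall fun k => oB_subset_cB (hmem k)
  have h2 : Tendsto (fun k => q (((ck k : ℂ)) • z)) atTop (𝓝 (q z)) :=
    (hq.tendsto z).comp (tendsto_scale z)
  have h3 : Tendsto (fun k => ‖fext (((ck k : ℂ)) • z) - q (((ck k : ℂ)) • z)‖) atTop
      (𝓝 ‖fext z - q z‖) := (h1.sub h2).norm
  apply le_of_tendsto h3
  filter_upwards with k
  rw [hfe.2 (hmem k)]
  exact h _ (hmem k)

/-! ### Uniform continuity and MemAu algebra -/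

lemma ucOn_of_uc {β : Type*} [UniformSpace β] {f : ℓ2 → β} (h : UniformContinuous f)
    (s : Set ℓ2) : UniformContinuousOn f s := h.mono_left inf_le_left

lemma memAu_clm (φ : ℓ2 →L[ℂ] ℂ) : MemAu ⇑φ :=
  ⟨φ.differentiable.differentiableOn, ucOn_of_uc φ.uniformContinuous _⟩

lemma memAu_const (c : ℂ) : MemAu (fun _ => c) :=
  ⟨differentiableOn_const c, ucOn_of_uc uniformContinuous_const _⟩

lemma memAu_one : MemAu (1 : ℓ2 → ℂ) := memAu_const 1

lemma memAu_add {f g : ℓ2 → ℂ} (hf : MemAu f) (hg : MemAu g) : MemAu (f + g) := by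
  refine ⟨hf.1.add hg.1, ?_⟩
  have h1 := uniformContinuousOn_iff_restrict.mp hf.2
  have h2 := uniformContinuousOn_iff_restrict.mp hg.2
  exact uniformContinuousOn_iff_restrict.mpr (h1.add h2)

lemma memAu_sub {f g : ℓ2 → ℂ} (hf : MemAu f) (hg : MemAu g) : MemAu (f - g) := by
  refine ⟨hf.1.sub hg.1, ?_⟩
  have h1 := uniformContinuousOn_iff_restrict.mp hf.2
  have h2 := uniformContinuousOn_iff_restrict.mp hg.2
  exact uniformContinuousOn_iff_restrict.mpr (h1.sub h2)

lemma memAu_smul (c : ℂ) {f : ℓ2 → ℂ} (hf : MemAu f) : MemAu (c • f) := by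
  refine ⟨hf.1.const_smul c, ?_⟩
  have h1 := uniformContinuousOn_iff_restrict.mp hf.2
  exact uniformContinuousOn_iff_restrict.mpr (h1.const_smul c)

lemma ucOn_mul {f g : ℓ2 → ℂ} {Mf Mg : ℝ}
    (hf : UniformContinuousOn f oB) (hg : UniformContinuousOn g oB)
    (hMf : ∀ x ∈ oB, ‖f x‖ ≤ Mf) (hMg : ∀ x ∈ oB, ‖g x‖ ≤ Mg) :
    UniformContinuousOn (f * g) oB := by
  rw [Metric.uniformContinuousOn_iff] at *
  intro ε hε
  set M : ℝ := max Mf Mg + 1 with hM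
  have hM0 : 0 < M := by
    have : (0:ℝ) ≤ Mf := (norm_nonneg _).trans (hMf 0 zero_mem_oB)
    have : (0:ℝ) ≤ max Mf Mg := le_trans this (le_max_left _ _)
    linarith
  obtain ⟨δ₁, hδ₁, H₁⟩ := hf (ε / (2 * M)) (by positivity)
  obtain ⟨δ₂, hδ₂, H₂⟩ := hg (ε / (2 * M)) (by positivity)
  refine ⟨min δ₁ δ₂, lt_min hδ₁ hδ₂, fun x hx y hy hxy => ?_⟩
  have h1 := H₁ x hx y hy (hxy.trans_le (min_le_left _ _))
  have h2 := H₂ x hx y hy (hxy.trans_le (min_le_right _ _))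
  have key : f x * g x - f y * g y = f x * (g x - g y) + g y * (f x - f y) := by ring
  have hfx : ‖f x‖ ≤ M := (hMf x hx).trans (by simp [hM]; linarith [le_max_left Mf Mg])
  have hgy : ‖g y‖ ≤ M := (hMg y hy).trans (by simp [hM]; linarith [le_max_right Mf Mg])
  rw [dist_eq_norm] at h1 h2 ⊢
  calc ‖(f * g) x - (f * g) y‖ = ‖f x * (g x - g y) + g y * (f x - f y)‖ := by
        simp only [Pi.mul_apply]; rw [key]
    _ ≤ ‖f x‖ * ‖g x - g y‖ + ‖g y‖ * ‖f x - f y‖ := by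
        refine (norm_add_le _ _).trans ?_
        simp [norm_mul]
    _ ≤ M * ‖g x - g y‖ + M * ‖f x - f y‖ := by
        gcongr
    _ < M * (ε / (2 * M)) + M * (ε / (2 * M)) := by
        exact add_lt_add (mul_lt_mul_of_pos_left h2 hM0) (mul_lt_mul_of_pos_left h1 hM0)
    _ = ε := by field_simp; ring

/-! ### Finite type polynomials are nice -/

def PolyGood (p : ℓ2 → ℂ) : Prop :=
  Differentiable ℂ p ∧ (∃ M, ∀ z ∈ cB, ‖p z‖ ≤ M) ∧ UniformContinuousOn p oB

lemma polyGood_of_mem {p : ℓ2 → ℂ} (hp : p ∈ finTypePolys) : PolyGood p := by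
  induction hp using Algebra.adjoin_induction with
  | mem q hq =>
    obtain ⟨φ, rfl⟩ := hq
    refine ⟨φ.differentiable, ⟨‖φ‖, fun z hz => ?_⟩, ucOn_of_uc φ.uniformContinuous _⟩
    calc ‖φ z‖ ≤ ‖φ‖ * ‖z‖ := φ.le_opNorm z
      _ ≤ ‖φ‖ * 1 := by
          exact mul_le_mul_of_nonneg_left (mem_cB_iff.mp hz) (norm_nonneg _)
      _ = ‖φ‖ := mul_one _
  | algebraMap c =>
    have : (algebraMap ℂ (ℓ2 → ℂ) c) = fun _ => c := rfl
    rw [this]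
    exact ⟨differentiable_const c, ⟨‖c‖, fun z _ => le_refl _⟩,
      ucOn_of_uc uniformContinuous_const _⟩
  | add q r hq hr ihq ihr =>
    refine ⟨ihq.1.add ihr.1, ?_, ?_⟩
    · obtain ⟨Mq, hMq⟩ := ihq.2.1; obtain ⟨Mr, hMr⟩ := ihr.2.1
      exact ⟨Mq + Mr, fun z hz => (norm_add_le _ _).trans (add_le_add (hMq z hz) (hMr z hz))⟩
    · exact uniformContinuousOn_iff_restrict.mpr
        ((uniformContinuousOn_iff_restrict.mp ihq.2.2).add
          (uniformContinuousOn_iff_restrict.mp ihr.2.2))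
  | mul q r hq hr ihq ihr =>
    obtain ⟨Mq, hMq⟩ := ihq.2.1; obtain ⟨Mr, hMr⟩ := ihr.2.1
    refine ⟨ihq.1.mul ihr.1, ?_, ?_⟩
    · exact ⟨Mq * Mr, fun z hz => by
        rw [Pi.mul_apply, norm_mul]
        exact mul_le_mul (hMq z hz) (hMr z hz) (norm_nonneg _)
          ((norm_nonneg _).trans (hMq z hz))⟩
    · exact ucOn_mul ihq.2.2 ihr.2.2 (fun x hx => hMq x (oB_subset_cB hx))
        (fun x hx => hMr x (oB_subset_cB hx))

lemma memAu_of_polyGood {p : ℓ2 → ℂ} (hp : PolyGood p) : MemAu p :=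
  ⟨hp.1.differentiableOn, hp.2.2⟩

lemma memAu_of_mem_poly {p : ℓ2 → ℂ} (hp : p ∈ finTypePolys) : MemAu p :=
  memAu_of_polyGood (polyGood_of_mem hp)

/-! ### `Φ(1) = 1` on the ball -/

lemma Phi_one (Φ : MuInfHom) {x : ℓ2} (hx : x ∈ oB) : Φ.toFun 1 x = 1 := by
  set e := Φ.toFun 1 with he
  have hmem : MemHinf e := Φ.maps_mem 1 memAu_one
  have idem : ∀ y ∈ oB, e y = e y * e y := by
    intro y hy
    have := Φ.map_mul 1 1 memAu_one memAu_one y hy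
    rw [one_mul] at this
    exact this
  have h01 : ∀ y ∈ oB, e y = 0 ∨ e y = 1 := by
    intro y hy
    have h := idem y hy
    rcases eq_or_ne (e y) 0 with h0 | h0
    · exact Or.inl h0
    · right
      have h' : e y * 1 = e y * e y := by rw [mul_one]; exact h
      exact (mul_left_cancel₀ h0 h').symm
  obtain ⟨f₀, hf₀, x₀, hx₀, hne⟩ := Φ.nonzero
  have hx₀1 : e x₀ = 1 := by
    have h := Φ.map_mul f₀ 1 hf₀ memAu_one x₀ hx₀
    rw [mul_one] at h
    have h' : Φ.toFun f₀ x₀ * 1 = Φ.toFun f₀ x₀ * e x₀ := by rw [mul_one]; exact h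
    exact (mul_left_cancel₀ hne h').symm
  -- the image of `oB` under `e` is preconnected and contained in `{0, 1}`
  have hconn : IsPreconnected (e '' oB) := by
    have : Convex ℝ oB := convex_ball 0 1
    exact this.isPreconnected.image e hmem.1.continuousOn
  rcases h01 x hx with h0 | h1
  · exfalso
    have hU : IsOpen (Metric.ball (0:ℂ) (1/2)) := isOpen_ball
    have hV : IsOpen (Metric.ball (1:ℂ) (1/2)) := isOpen_ball
    have hsub : e '' oB ⊆ Metric.ball (0:ℂ) (1/2) ∪ Metric.ball (1:ℂ) (1/2) := by
      rintro _ ⟨y, hy, rfl⟩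
      rcases h01 y hy with h | h
      · left; simp [h]
      · right; simp [h]
    have hene1 : ((e '' oB) ∩ Metric.ball (0:ℂ) (1/2)).Nonempty :=
      ⟨0, ⟨x, hx, h0⟩, by simp⟩
    have hene2 : ((e '' oB) ∩ Metric.ball (1:ℂ) (1/2)).Nonempty :=
      ⟨1, ⟨x₀, hx₀, hx₀1⟩, by simp⟩
    obtain ⟨z, hz, hz0, hz1⟩ := hconn _ _ hU hV hsub hene1 hene2
    obtain ⟨y, hy, rfl⟩ := hz
    rcases h01 y hy with h | h
    · rw [h] at hz1
      simp only [Metric.mem_ball, dist_eq_norm] at hz1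
      norm_num at hz1
    · rw [h] at hz0
      simp only [Metric.mem_ball, dist_eq_norm] at hz0
      norm_num at hz0
  · exact h1

/-! ### Coordinates and finite linear combinations -/

lemma coord_eq (n : ℕ) : coord n = ⇑(innerSL ℂ (lp.single 2 n (1:ℂ))) := by
  funext z
  simp only [innerSL_apply_apply, coord]
  rw [lp.inner_single_left]
  simp

lemma memAu_coord (n : ℕ) : MemAu (coord n) := by
  rw [coord_eq]; exact memAu_clm _

lemma Phi_finsum (Φ : MuInfHom) {x : ℓ2} (hx : x ∈ oB) (a : ℕ → ℂ) (N : ℕ) :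
    MemAu (fun z : ℓ2 => ∑ n ∈ Finset.range N, a n * z n) ∧
    Φ.toFun (fun z : ℓ2 => ∑ n ∈ Finset.range N, a n * z n) x
      = ∑ n ∈ Finset.range N, a n * Φ.toFun (coord n) x := by
  induction N with
  | zero =>
    have h0 : (fun z : ℓ2 => ∑ n ∈ Finset.range 0, a n * z n) = (0:ℂ) • coord 0 := by
      funext z; simp
    rw [h0]
    refine ⟨memAu_smul 0 (memAu_coord 0), ?_⟩
    rw [Φ.map_smul 0 (coord 0) (memAu_coord 0) x hx]
    simp
  | succ N ih =>
    have hstep : (fun z : ℓ2 => ∑ n ∈ Finset.range (N+1), a n * z n)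
        = (fun z : ℓ2 => ∑ n ∈ Finset.range N, a n * z n) + a N • coord N := by
      funext z
      simp [Finset.sum_range_succ, coord]
    have hsm : MemAu (a N • coord N) := memAu_smul _ (memAu_coord N)
    rw [hstep]
    refine ⟨memAu_add ih.1 hsm, ?_⟩
    rw [Φ.map_add _ _ ih.1 hsm x hx, ih.2, Φ.map_smul _ _ (memAu_coord N) x hx,
      Finset.sum_range_succ]

/-! ### `Φ` acts as evaluation on continuous linear functionals -/

lemma Phi_clm (Φ : MuInfHom) {x : ℓ2} (hx : x ∈ oB) {gx : ℓ2}
    (hgx : ∀ n, Φ.toFun (coord n) x = gx n) (φ : ℓ2 →L[ℂ] ℂ) :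
    Φ.toFun ⇑φ x = φ gx := by
  obtain ⟨C, hC⟩ := Φ.cont
  set C' : ℝ := max C 0 with hC'
  obtain ⟨v, hv⟩ : ∃ v : ℓ2, ∀ z, φ z = (inner ℂ v z : ℂ) := by
    obtain ⟨v, hv⟩ := (InnerProductSpace.toDual ℂ ℓ2).surjective φ
    exact ⟨v, fun z => by rw [← hv]; rfl⟩
  set vN : ℕ → ℓ2 := fun N => ∑ n ∈ Finset.range N, lp.single 2 n (v n) with hvN
  set SN : ℕ → ℓ2 → ℂ := fun N z => ∑ n ∈ Finset.range N, (starRingEnd ℂ) (v n) * z n with hSN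
  have hSN_inner : ∀ N z, (inner ℂ (vN N) z : ℂ) = SN N z := by
    intro N z
    rw [hvN, sum_inner]
    refine Finset.sum_congr rfl fun n _ => ?_
    rw [lp.inner_single_left]
    simp [RCLike.inner_apply, mul_comm]
  have hdiff : ∀ N z, φ z - SN N z = (inner ℂ (v - vN N) z : ℂ) := by
    intro N z
    rw [inner_sub_left, hv, hSN_inner]
  have hSN_memAu : ∀ N, MemAu (SN N) := fun N => (Phi_finsum Φ hx _ N).1
  have hbound : ∀ N z, z ∈ oB → ‖(⇑φ - SN N) z‖ ≤ ‖v - vN N‖ := by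
    intro N z hz
    rw [Pi.sub_apply, hdiff]
    calc ‖(inner ℂ (v - vN N) z : ℂ)‖ ≤ ‖v - vN N‖ * ‖z‖ := norm_inner_le_norm _ _
      _ ≤ ‖v - vN N‖ * 1 :=
          mul_le_mul_of_nonneg_left (le_of_lt (mem_oB_iff.mp hz)) (norm_nonneg _)
      _ = _ := mul_one _
  have hsup : ∀ N, supNorm (⇑φ - SN N) ≤ ‖v - vN N‖ := fun N =>
    supNorm_le fun z hz => hbound N z hz
  have hsplit : ∀ N, Φ.toFun ⇑φ x = Φ.toFun (⇑φ - SN N) x + Φ.toFun (SN N) x := by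
    intro N
    have h1 : ⇑φ = (⇑φ - SN N) + SN N := by funext z; simp
    calc Φ.toFun ⇑φ x = Φ.toFun ((⇑φ - SN N) + SN N) x := by rw [← h1]
      _ = _ := Φ.map_add _ _ (memAu_sub (memAu_clm φ) (hSN_memAu N)) (hSN_memAu N) x hx
  have hΦSN : ∀ N, Φ.toFun (SN N) x = (inner ℂ (vN N) gx : ℂ) := by
    intro N
    rw [hSN_inner N gx]
    have := (Phi_finsum Φ hx (fun n => (starRingEnd ℂ) (v n)) N).2
    rw [hSN]
    rw [this]
    exact Finset.sum_congr rfl fun n _ => by rw [hgx n]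
  -- the crucial estimate
  have hest : ∀ N, ‖Φ.toFun ⇑φ x - φ gx‖ ≤ C' * ‖v - vN N‖ + ‖v - vN N‖ * ‖gx‖ := by
    intro N
    have heq : Φ.toFun ⇑φ x - φ gx
        = Φ.toFun (⇑φ - SN N) x - (inner ℂ (v - vN N) gx : ℂ) := by
      rw [hsplit N, hΦSN N, hv, inner_sub_left]
      ring
    rw [heq]
    refine (norm_sub_le _ _).trans (add_le_add ?_ (norm_inner_le_norm _ _))
    have hs0 : 0 ≤ supNorm (⇑φ - SN N) := by
      apply supNorm_nonneg
      exact ⟨‖v - vN N‖, fun z hz => hbound N z hz⟩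
    calc ‖Φ.toFun (⇑φ - SN N) x‖ ≤ C * supNorm (⇑φ - SN N) :=
          hC _ (memAu_sub (memAu_clm φ) (hSN_memAu N)) x hx
      _ ≤ C' * supNorm (⇑φ - SN N) := mul_le_mul_of_nonneg_right (le_max_left _ _) hs0
      _ ≤ C' * ‖v - vN N‖ := mul_le_mul_of_nonneg_left (hsup N) (le_max_right _ _)
  have hT : Tendsto (fun N => ‖v - vN N‖) atTop (𝓝 0) := by
    have h1 := (lp.hasSum_single (by norm_num : (2:ENNReal) ≠ ⊤) v).tendsto_sum_nat
    have h2 := (tendsto_const_nhds : Tendsto (fun _ : ℕ => v) atTop (𝓝 v)).sub h1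
    have h3 := h2.norm
    simpa using h3
  have hRHS : Tendsto (fun N => C' * ‖v - vN N‖ + ‖v - vN N‖ * ‖gx‖) atTop (𝓝 0) := by
    have := (hT.const_mul C').add (hT.mul_const ‖gx‖)
    simpa using this
  have : ‖Φ.toFun ⇑φ x - φ gx‖ ≤ 0 := ge_of_tendsto hRHS (Eventually.of_forall hest)
  have h0 : ‖Φ.toFun ⇑φ x - φ gx‖ = 0 := le_antisymm this (norm_nonneg _)
  rwa [norm_eq_zero, sub_eq_zero] at h0

/-! ### Norm bound for the projection: `‖gx‖ ≤ 1` -/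

lemma pow_le_trick {a b C : ℝ} (ha : 0 ≤ a) (hb : 0 ≤ b)
    (h : ∀ k : ℕ, 1 ≤ k → a ^ k ≤ C * b ^ k) : a ≤ b := by
  by_contra hab
  push_neg at hab
  have ha' : 0 < a := lt_of_le_of_lt hb hab
  have hr : b / a < 1 := (div_lt_one ha').mpr hab
  have hr' : 0 ≤ b / a := div_nonneg hb ha'.le
  have hlow : ∀ k : ℕ, 1 ≤ k → 1 ≤ C * (b / a) ^ k := by
    intro k hk
    have hap : (0:ℝ) < a ^ k := pow_pos ha' k
    have := h k hk
    rw [div_pow, ← mul_div_assoc, le_div_iff₀ hap, one_mul]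
    exact this
  have hT : Tendsto (fun k : ℕ => C * (b / a) ^ k) atTop (𝓝 0) := by
    have := tendsto_pow_atTop_nhds_zero_of_lt_one hr' hr
    simpa using this.const_mul C
  have : ∀ᶠ k : ℕ in atTop, C * (b / a) ^ k < 1 := by
    have := hT.eventually (eventually_lt_nhds (by norm_num : (0:ℝ) < 1))
    simpa using this
  obtain ⟨k, hk1, hk2⟩ := ((eventually_ge_atTop 1).and this).exists
  exact absurd (hlow k hk1) (not_le.mpr hk2)

lemma Phi_pow (Φ : MuInfHom) {x : ℓ2} (hx : x ∈ oB) {u : ℓ2 → ℂ} (hu : u ∈ finTypePolys) :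
    ∀ k : ℕ, Φ.toFun (u ^ k) x = (Φ.toFun u x) ^ k := by
  intro k
  induction k with
  | zero => simpa using Phi_one Φ hx
  | succ k ih =>
    have h1 : MemAu (u ^ k) := memAu_of_mem_poly (pow_mem hu k)
    have h2 : MemAu u := memAu_of_mem_poly hu
    rw [pow_succ, pow_succ, Φ.map_mul _ _ h1 h2 x hx, ih]

lemma norm_Phi_le_supNorm (Φ : MuInfHom) {x : ℓ2} (hx : x ∈ oB) {u : ℓ2 → ℂ}
    (hu : u ∈ finTypePolys) : ‖Φ.toFun u x‖ ≤ supNorm u := by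
  obtain ⟨M, hM⟩ := (polyGood_of_mem hu).2.1
  have hMo : ∀ z ∈ oB, ‖u z‖ ≤ M := fun z hz => hM z (oB_subset_cB hz)
  obtain ⟨C, hC⟩ := Φ.cont
  set C' : ℝ := max C 0 with hC'
  have hs0 : 0 ≤ supNorm u := supNorm_nonneg ⟨M, hMo⟩
  refine pow_le_trick (norm_nonneg _) hs0 (C := C') fun k hk => ?_
  have hsk : supNorm (u ^ k) ≤ (supNorm u) ^ k := by
    apply supNorm_le
    intro z hz
    have : ‖(u ^ k) z‖ = ‖u z‖ ^ k := by
      rw [Pi.pow_apply, norm_pow]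
    rw [this]
    exact pow_le_pow_left₀ (norm_nonneg _) (norm_le_supNorm ⟨M, hMo⟩ hz) k
  have hsk0 : 0 ≤ supNorm (u ^ k) := by
    apply supNorm_nonneg
    exact ⟨M ^ k, fun z hz => by
      rw [Pi.pow_apply, norm_pow]
      exact pow_le_pow_left₀ (norm_nonneg _) (hMo z hz) k⟩
  calc ‖Φ.toFun u x‖ ^ k = ‖(Φ.toFun u x) ^ k‖ := (norm_pow _ _).symm
    _ = ‖Φ.toFun (u ^ k) x‖ := by rw [Phi_pow Φ hx hu k]
    _ ≤ C * supNorm (u ^ k) := hC _ (memAu_of_mem_poly (pow_mem hu k)) x hx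
    _ ≤ C' * supNorm (u ^ k) := mul_le_mul_of_nonneg_right (le_max_left _ _) hsk0
    _ ≤ C' * (supNorm u) ^ k := mul_le_mul_of_nonneg_left hsk (le_max_right _ _)

lemma gx_norm_le (Φ : MuInfHom) {x : ℓ2} (hx : x ∈ oB) {gx : ℓ2}
    (hgx : ∀ n, Φ.toFun (coord n) x = gx n) : ‖gx‖ ≤ 1 := by
  set sN : ℕ → ℝ := fun N => ∑ n ∈ Finset.range N, ‖gx n‖ ^ 2 with hsN
  have hsN0 : ∀ N, 0 ≤ sN N := fun N => Finset.sum_nonneg fun n _ => sq_nonneg _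
  have key : ∀ N, sN N ≤ 1 := by
    intro N
    set wN : ℓ2 := ∑ n ∈ Finset.range N, lp.single 2 n (gx n) with hwN
    set u : ℓ2 → ℂ := ⇑(innerSL ℂ wN) with hu
    have humem : u ∈ finTypePolys := Algebra.subset_adjoin ⟨innerSL ℂ wN, rfl⟩
    -- norm of `wN`
    have hwnorm : ‖wN‖ ^ 2 = sN N := by
      have h2 : (0:ℝ) < (2:ENNReal).toReal := by norm_num
      have h := lp.norm_sum_single h2 (fun n => gx n) (Finset.range N)
      rw [ENNReal.toReal_ofNat, Real.rpow_two] at h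
      rw [hwN, hsN, h]
      exact Finset.sum_congr rfl fun n _ => Real.rpow_two _
    -- `u` as a finite sum of coordinates
    have huexp : u = fun z : ℓ2 => ∑ n ∈ Finset.range N, (starRingEnd ℂ) (gx n) * z n := by
      funext z
      rw [hu]
      simp only [innerSL_apply_apply]
      rw [hwN, sum_inner]
      refine Finset.sum_congr rfl fun n _ => ?_
      rw [lp.inner_single_left]
      simp [RCLike.inner_apply, mul_comm]
    -- value of `Φ u` at `x`
    have hval : Φ.toFun u x = ((sN N : ℝ) : ℂ) := by
      rw [huexp]
      rw [(Phi_finsum Φ hx (fun n => (starRingEnd ℂ) (gx n)) N).2]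
      rw [hsN]
      push_cast
      refine Finset.sum_congr rfl fun n _ => ?_
      rw [hgx n, mul_comm, Complex.mul_conj']
    -- bound via the power trick
    have h1 : ‖Φ.toFun u x‖ = sN N := by
      rw [hval, Complex.norm_real, Real.norm_eq_abs, abs_of_nonneg (hsN0 N)]
    have h2 : supNorm u ≤ ‖wN‖ := by
      apply supNorm_le
      intro z hz
      rw [hu]
      simp only [innerSL_apply_apply]
      calc ‖(inner ℂ wN z : ℂ)‖ ≤ ‖wN‖ * ‖z‖ := norm_inner_le_norm _ _
        _ ≤ ‖wN‖ * 1 := mul_le_mul_of_nonneg_left (mem_oB_iff.mp hz).le (norm_nonneg _)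
        _ = ‖wN‖ := mul_one _
    have h3 : sN N ≤ ‖wN‖ := h1 ▸ (norm_Phi_le_supNorm Φ hx humem).trans h2
    nlinarith [norm_nonneg wN, hsN0 N]
  -- conclude `‖gx‖ ≤ 1`
  have hsum : Summable fun n => ‖gx n‖ ^ 2 := by
    have h2 : (0:ℝ) < (2:ENNReal).toReal := by norm_num
    have := (lp.memℓp gx).summable h2
    have hcongr : (fun n : ℕ => ‖gx n‖ ^ (2:ENNReal).toReal) = fun n => ‖gx n‖ ^ 2 := by
      funext n
      rw [ENNReal.toReal_ofNat, Real.rpow_two]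
    rwa [hcongr] at this
  have htsum : ∑' n, ‖gx n‖ ^ 2 ≤ 1 := by
    apply Summable.tsum_le_of_sum_le hsum
    intro s
    have hsub : s ⊆ Finset.range (s.sup id + 1) := by
      intro n hn
      simp only [Finset.mem_range]
      exact Nat.lt_succ_of_le (Finset.le_sup (f := id) hn)
    calc ∑ n ∈ s, ‖gx n‖ ^ 2 ≤ ∑ n ∈ Finset.range (s.sup id + 1), ‖gx n‖ ^ 2 :=
          Finset.sum_le_sum_of_subset_of_nonneg hsub fun n _ _ => sq_nonneg _
      _ ≤ 1 := key _
  have hnorm2 : ‖gx‖ ^ 2 = ∑' n, ‖gx n‖ ^ 2 := by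
    have h2 : (0:ℝ) < (2:ENNReal).toReal := by norm_num
    have := lp.norm_rpow_eq_tsum h2 gx
    rw [ENNReal.toReal_ofNat, Real.rpow_two] at this
    rw [this]
    exact tsum_congr fun n => by norm_num
  nlinarith [norm_nonneg gx, hnorm2 ▸ htsum]

/-! ### `Φ` acts as evaluation on all finite type polynomials -/

lemma Phi_poly (Φ : MuInfHom) {x : ℓ2} (hx : x ∈ oB) {gx : ℓ2}
    (hgx : ∀ n, Φ.toFun (coord n) x = gx n) {p : ℓ2 → ℂ} (hp : p ∈ finTypePolys) :
    Φ.toFun p x = p gx := by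
  induction hp using Algebra.adjoin_induction with
  | mem q hq =>
    obtain ⟨φ, rfl⟩ := hq
    exact Phi_clm Φ hx hgx φ
  | algebraMap c =>
    have h : (algebraMap ℂ (ℓ2 → ℂ) c) = c • (1 : ℓ2 → ℂ) := by
      funext z; simp [Algebra.algebraMap_eq_smul_one]
    rw [h, Φ.map_smul c 1 memAu_one x hx, Phi_one Φ hx]
    simp
  | add q r hq hr ihq ihr =>
    rw [Φ.map_add _ _ (memAu_of_mem_poly hq) (memAu_of_mem_poly hr) x hx, ihq, ihr]
    rfl
  | mul q r hq hr ihq ihr =>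
    rw [Φ.map_mul _ _ (memAu_of_mem_poly hq) (memAu_of_mem_poly hr) x hx, ihq, ihr]
    rfl

/-! ### Part 1: `Φ(f) = C_{ξ(Φ)}(f)` -/

lemma part1 {f : ℓ2 → ℂ} (hf : MemAu f)
    (happrox : ∀ ε > 0, ∃ p ∈ finTypePolys, ∀ x ∈ oB, ‖f x - p x‖ < ε)
    (Φ : MuInfHom) (fext : ℓ2 → ℂ) (hfe : IsExt f fext) {x : ℓ2} (hx : x ∈ oB)
    (gx : ℓ2) (hgxn : ∀ n : ℕ, gx n = Φ.toFun (coord n) x) : Φ.toFun f x = fext gx := by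
  have hgx : ∀ n, Φ.toFun (coord n) x = gx n := fun n => (hgxn n).symm
  have hgx1 : ‖gx‖ ≤ 1 := gx_norm_le Φ hx hgx
  obtain ⟨C, hC⟩ := Φ.cont
  set C' : ℝ := max C 0 with hC'
  have hC'0 : (0:ℝ) < C' + 1 := by positivity
  have key : ∀ ε > 0, ‖Φ.toFun f x - fext gx‖ ≤ (C' + 1) * ε := by
    intro ε hε
    obtain ⟨p, hp, hpa⟩ := happrox ε hε
    have hmemp := memAu_of_mem_poly hp
    have hsub : MemAu (f - p) := memAu_sub hf hmemp
    have hbd : ∀ z ∈ oB, ‖(f - p) z‖ ≤ ε := fun z hz => by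
      rw [Pi.sub_apply]; exact (hpa z hz).le
    have hsplit : Φ.toFun f x = Φ.toFun (f - p) x + Φ.toFun p x := by
      have h1 : f = (f - p) + p := by funext z; simp
      calc Φ.toFun f x = Φ.toFun ((f - p) + p) x := by rw [← h1]
        _ = _ := Φ.map_add _ _ hsub hmemp x hx
    have h2 : Φ.toFun p x = p gx := Phi_poly Φ hx hgx hp
    have hsup : supNorm (f - p) ≤ ε := supNorm_le hbd
    have hsup0 : 0 ≤ supNorm (f - p) := supNorm_nonneg ⟨ε, hbd⟩
    have h3 : ‖Φ.toFun (f - p) x‖ ≤ C' * ε :=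
      calc ‖Φ.toFun (f - p) x‖ ≤ C * supNorm (f - p) := hC _ hsub x hx
        _ ≤ C' * supNorm (f - p) := mul_le_mul_of_nonneg_right (le_max_left _ _) hsup0
        _ ≤ C' * ε := mul_le_mul_of_nonneg_left hsup (le_max_right _ _)
    have h4 : ‖fext gx - p gx‖ ≤ ε :=
      ext_est hfe (polyGood_of_mem hp).1.continuous (fun z hz => (hpa z hz).le) gx
        (mem_cB_iff.mpr hgx1)
    have heq : Φ.toFun f x - fext gx = Φ.toFun (f - p) x + (p gx - fext gx) := by
      rw [hsplit, h2]; ring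
    calc ‖Φ.toFun f x - fext gx‖ = ‖Φ.toFun (f - p) x + (p gx - fext gx)‖ := by rw [heq]
      _ ≤ ‖Φ.toFun (f - p) x‖ + ‖p gx - fext gx‖ := norm_add_le _ _
      _ ≤ C' * ε + ε := add_le_add h3 (by rw [norm_sub_rev]; exact h4)
      _ = (C' + 1) * ε := by ring
  have h0 : ‖Φ.toFun f x - fext gx‖ ≤ 0 := by
    refine le_of_forall_pos_le_add fun δ hδ => ?_
    have := key (δ / (C' + 1)) (by positivity)
    rw [mul_div_cancel₀ _ hC'0.ne'] at this
    linarith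
  have := le_antisymm h0 (norm_nonneg _)
  rwa [norm_eq_zero, sub_eq_zero] at this

/-! ### Cauchy estimate for derivatives of bounded holomorphic functions -/

lemma cauchy_deriv_bound {G : ℓ2 → ℂ} {c : ℓ2} {ρ M : ℝ} (hρ : 0 < ρ)
    (hd : DifferentiableOn ℂ G (ball c ρ)) (hM : ∀ z ∈ ball c ρ, ‖G z‖ ≤ M)
    {y : ℓ2} (hy : y ∈ ball c (ρ/2)) : ‖fderiv ℂ G y‖ ≤ 4 * M / ρ := by
  have hM0 : 0 ≤ M := (norm_nonneg _).trans (hM c (mem_ball_self hρ))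
  have hymem : y ∈ ball c ρ := ball_subset_ball (by linarith) hy
  have hGy : DifferentiableAt ℂ G y := hd.differentiableAt (isOpen_ball.mem_nhds hymem)
  have hdir : ∀ v : ℓ2, ‖fderiv ℂ G y v‖ ≤ 4 * M / ρ * ‖v‖ := by
    intro v
    rcases eq_or_ne v 0 with rfl | hv
    · simp
    · have hv0 : 0 < ‖v‖ := norm_pos_iff.mpr hv
      set R : ℝ := ρ / (2 * ‖v‖) with hR
      have hR0 : 0 < R := by positivity
      set ψ : ℂ → ℂ := fun z => G (y + z • v) with hψ
      have hmaps : ∀ z : ℂ, z ∈ ball (0:ℂ) R → (y + z • v) ∈ ball c ρ := by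
        intro z hz
        rw [mem_ball] at hz ⊢
        simp only [dist_zero_right] at hz
        have h1 : dist (y + z • v) c ≤ dist y c + ‖z • v‖ := by
          rw [dist_eq_norm, dist_eq_norm]
          have : y + z • v - c = (y - c) + z • v := by abel
          rw [this]
          exact norm_add_le _ _
        have h2 : ‖z • v‖ < R * ‖v‖ := by
          rw [norm_smul]
          exact mul_lt_mul_of_pos_right hz hv0
        have h3 : R * ‖v‖ = ρ / 2 := by
          rw [hR]; field_simp
        have h4 : dist y c < ρ / 2 := mem_ball.mp hy
        linarith
      have hline : Differentiable ℂ (fun z : ℂ => y + z • v) :=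
        (differentiable_id.smul_const v).const_add y
      have hψd : DifferentiableOn ℂ ψ (ball (0:ℂ) R) :=
        hd.comp hline.differentiableOn fun z hz => hmaps z hz
      have hDψ : HasDerivAt ψ (fderiv ℂ G y v) 0 := by
        have hl : HasDerivAt (fun z : ℂ => y + z • v) v 0 := by
          simpa using ((hasDerivAt_id (0:ℂ)).smul_const v).const_add y
        have hGy' : HasFDerivAt G (fderiv ℂ G y) (y + (0:ℂ) • v) := by
          simpa using hGy.hasFDerivAt
        have := hGy'.comp_hasDerivAt 0 hl
        exact this
      have hψ0 : ψ 0 = G y := by simp [hψ]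
      have key : ∀ δ > 0, ‖deriv ψ 0‖ ≤ (2 * M + δ) / R := by
        intro δ hδ
        apply Complex.norm_deriv_le_div_of_mapsTo_ball hψd ?_ hR0
        intro z hz
        rw [mem_closedBall]
        have hz1 := hM _ (hmaps z hz)
        have hz0 : ‖G y‖ ≤ M := hM _ hymem
        calc dist (ψ z) (ψ 0) ≤ ‖ψ z‖ + ‖ψ 0‖ := dist_le_norm_add_norm _ _
          _ ≤ M + M := by rw [hψ0]; exact add_le_add hz1 hz0
          _ ≤ 2 * M + δ := by linarith
      have hconc : ‖fderiv ℂ G y v‖ ≤ 2 * M / R := by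
        rw [← hDψ.deriv]
        refine le_of_forall_pos_le_add fun δ hδ => ?_
        have := key (δ * R) (by positivity)
        have heq : (2 * M + δ * R) / R = 2 * M / R + δ := by
          field_simp
        linarith [heq ▸ this]
      have heq2 : 2 * M / R = 4 * M / ρ * ‖v‖ := by
        rw [hR]
        field_simp
        ring
      linarith [heq2 ▸ hconc]
  exact ContinuousLinearMap.opNorm_le_bound _ (by positivity) hdir

/-! ### Uniform limits of holomorphic functions on the ball are holomorphic -/

lemma diffOn_of_unif_lim {F : ℓ2 → ℂ} {P : ℕ → ℓ2 → ℂ}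
    (hP : ∀ k, DifferentiableOn ℂ (P k) oB)
    (happ : ∀ k : ℕ, ∀ x ∈ oB, ‖F x - P k x‖ ≤ 1 / (k + 1)) :
    DifferentiableOn ℂ F oB := by
  classical
  intro a ha
  have ha1 : ‖a‖ < 1 := mem_oB_iff.mp ha
  set r : ℝ := (1 - ‖a‖) / 2 with hr
  have hr0 : 0 < r := by rw [hr]; linarith
  have hball : ball a (2 * r) ⊆ oB := by
    intro z hz
    rw [mem_ball, dist_eq_norm] at hz
    rw [mem_oB_iff]
    have h1 : ‖z‖ - ‖a‖ ≤ ‖z - a‖ := norm_sub_norm_le z a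
    have h2 : 2 * r = 1 - ‖a‖ := by rw [hr]; ring
    linarith
  have hball2 : ball a r ⊆ oB := fun z hz => hball (ball_subset_ball (by linarith) hz)
  have hPat : ∀ (k : ℕ), ∀ y ∈ ball a r, DifferentiableAt ℂ (P k) y := fun k y hy =>
    (hP k).differentiableAt (isOpen_oB.mem_nhds (hball2 hy))
  have hest : ∀ k j : ℕ, ∀ y ∈ ball a r,
      ‖fderiv ℂ (P k) y - fderiv ℂ (P j) y‖
        ≤ 4 * (1/((k:ℝ)+1) + 1/((j:ℝ)+1)) / (2 * r) := by
    intro k j y hy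
    have hAt : ∀ (k : ℕ), ∀ z ∈ ball a (2*r), DifferentiableAt ℂ (P k) z := fun k z hz =>
      (hP k).differentiableAt (isOpen_oB.mem_nhds (hball hz))
    have hdsub : DifferentiableOn ℂ (P k - P j) (ball a (2*r)) := fun z hz =>
      ((hAt k z hz).sub (hAt j z hz)).differentiableWithinAt
    have hMsub : ∀ z ∈ ball a (2*r), ‖(P k - P j) z‖ ≤ 1/((k:ℝ)+1) + 1/((j:ℝ)+1) := by
      intro z hz
      have h1 := happ k z (hball hz)
      have h2 := happ j z (hball hz)
      have heq : (P k - P j) z = (P k z - F z) + (F z - P j z) := by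
        rw [Pi.sub_apply]; ring
      rw [heq]
      refine (norm_add_le _ _).trans (add_le_add ?_ h2)
      rw [norm_sub_rev]; exact h1
    have h2r : (0:ℝ) < 2 * r := by linarith
    have hy' : y ∈ ball a ((2*r)/2) := by
      rw [show (2*r)/2 = r by ring]; exact hy
    have hcb := cauchy_deriv_bound h2r hdsub hMsub hy'
    have hfd : fderiv ℂ (P k - P j) y = fderiv ℂ (P k) y - fderiv ℂ (P j) y :=
      fderiv_sub (hPat k y hy) (hPat j y hy)
    rwa [hfd] at hcb
  have hUC : UniformCauchySeqOn (fun k (y : ℓ2) => fderiv ℂ (P k) y) atTop (ball a r) := by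
    rw [Metric.uniformCauchySeqOn_iff]
    intro ε hε
    obtain ⟨N, hN⟩ := exists_nat_gt (4 / (r * ε))
    refine ⟨N, fun m hm n hn y hy => ?_⟩
    rw [dist_eq_norm]
    refine lt_of_le_of_lt (hest m n y hy) ?_
    have hNp : (0:ℝ) < (N:ℝ) + 1 := by positivity
    have hm1 : 1/((m:ℝ)+1) ≤ 1/((N:ℝ)+1) := by
      apply one_div_le_one_div_of_le hNp
      have : (N:ℝ) ≤ m := by exact_mod_cast hm
      linarith
    have hn1 : 1/((n:ℝ)+1) ≤ 1/((N:ℝ)+1) := by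
      apply one_div_le_one_div_of_le hNp
      have : (N:ℝ) ≤ n := by exact_mod_cast hn
      linarith
    calc 4 * (1/((m:ℝ)+1) + 1/((n:ℝ)+1)) / (2 * r)
        ≤ 4 * (1/((N:ℝ)+1) + 1/((N:ℝ)+1)) / (2 * r) := by gcongr
      _ = 4 / (r * ((N:ℝ)+1)) := by field_simp; ring
      _ < ε := by
          rw [div_lt_iff₀ (by positivity)]
          have h4 : 4 / (r * ε) < (N:ℝ) := hN
          rw [div_lt_iff₀ (by positivity)] at h4
          nlinarith
  have hptw : ∀ y ∈ ball a r, ∃ L, Tendsto (fun k => fderiv ℂ (P k) y) atTop (𝓝 L) := by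
    intro y hy
    apply cauchySeq_tendsto_of_complete
    rw [Metric.cauchySeq_iff]
    intro ε hε
    obtain ⟨N, hN⟩ := Metric.uniformCauchySeqOn_iff.mp hUC ε hε
    exact ⟨N, fun m hm n hn => hN m hm n hn y hy⟩
  set g' : ℓ2 → (ℓ2 →L[ℂ] ℂ) :=
    fun y => if h : y ∈ ball a r then (hptw y h).choose else 0 with hg'def
  have hg' : ∀ y ∈ ball a r, Tendsto (fun k => fderiv ℂ (P k) y) atTop (𝓝 (g' y)) := by
    intro y hy
    rw [hg'def]
    simp only [dif_pos hy]
    exact (hptw y hy).choose_spec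
  have hTU : TendstoUniformlyOn (fun k (y : ℓ2) => fderiv ℂ (P k) y) g' atTop (ball a r) :=
    hUC.tendstoUniformlyOn_of_tendsto hg'
  have hptF : ∀ y ∈ ball a r, Tendsto (fun k => P k y) atTop (𝓝 (F y)) := by
    intro y hy
    rw [tendsto_iff_dist_tendsto_zero]
    have hub : ∀ k : ℕ, dist (P k y) (F y) ≤ 1/((k:ℝ)+1) := fun k => by
      rw [dist_eq_norm, norm_sub_rev]
      exact happ k y (hball2 hy)
    exact squeeze_zero (fun k => dist_nonneg) hub tendsto_one_div_add_atTop_nhds_zero_nat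
  have hmain := hasFDerivAt_of_tendstoUniformlyOn isOpen_ball hTU
      (fun k y hy => (hPat k y hy).hasFDerivAt) hptF (mem_ball_self hr0)
  exact hmain.differentiableAt.differentiableWithinAt

/-! ### Weak convergence and polynomials -/

lemma poly_weak {ι : Type} {l : Filter ι} {w : ι → ℓ2} {wlim : ℓ2}
    (hweak : ∀ u : ℓ2, Tendsto (fun i => (inner ℂ (w i) u : ℂ)) l (𝓝 (inner ℂ wlim u)))
    {p : ℓ2 → ℂ} (hp : p ∈ finTypePolys) :
    Tendsto (fun i => p (w i)) l (𝓝 (p wlim)) := by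
  induction hp using Algebra.adjoin_induction with
  | mem q hq =>
    obtain ⟨φ, rfl⟩ := hq
    obtain ⟨v, hv⟩ : ∃ v : ℓ2, ∀ z, φ z = (inner ℂ v z : ℂ) := by
      obtain ⟨v, hv⟩ := (InnerProductSpace.toDual ℂ ℓ2).surjective φ
      exact ⟨v, fun z => by rw [← hv]; rfl⟩
    have hconj : ∀ z : ℓ2, φ z = (starRingEnd ℂ) (inner ℂ z v : ℂ) := fun z => by
      rw [hv, ← inner_conj_symm]
    have h1 : Tendsto (fun i => (starRingEnd ℂ) (inner ℂ (w i) v : ℂ)) l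
        (𝓝 ((starRingEnd ℂ) (inner ℂ wlim v : ℂ))) :=
      (Complex.continuous_conj.tendsto _).comp (hweak v)
    have heq : (fun i => φ (w i)) = fun i => (starRingEnd ℂ) (inner ℂ (w i) v : ℂ) := by
      funext i; rw [hconj]
    have hgoal : Tendsto (fun i => φ (w i)) l (𝓝 (φ wlim)) := by
      rw [heq, hconj wlim]; exact h1
    exact hgoal
  | algebraMap c =>
    have h : (algebraMap ℂ (ℓ2 → ℂ) c) = fun _ : ℓ2 => c := rfl
    rw [h]
    exact tendsto_const_nhds
  | add q r hq hr ihq ihr =>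
    have := ihq.add ihr
    simpa using this
  | mul q r hq hr ihq ihr =>
    have := ihq.mul ihr
    simpa using this

/-! ### Part 2(a): the cluster set is contained in `{C_g(f)}` -/

lemma part2a {f fext : ℓ2 → ℂ} (hfe : IsExt f fext)
    (happrox : ∀ ε > 0, ∃ p ∈ finTypePolys, ∀ x ∈ oB, ‖f x - p x‖ < ε)
    {g : ℓ2 → ℓ2} (hg : MemHinfV g) (hg1 : supNormV g ≤ 1)
    {h : ℓ2 → ℂ} (hclu : InCluster fext g h) : ∀ x ∈ oB, h x = fext (g x) := by
  obtain ⟨ι, l, hne, gA, hgA, hweak, hlim⟩ := hclu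
  intro y hy
  have hgoB : ∀ i, gA i y ∈ oB := by
    intro i
    rw [mem_oB_iff]
    exact lt_of_le_of_lt (norm_le_supNormV (hgA i).1.2 hy) (hgA i).2
  have hgcB : g y ∈ cB := mem_cB_iff.mpr ((norm_le_supNormV hg.2 hy).trans hg1)
  have key : ∀ ε > 0, ‖h y - fext (g y)‖ ≤ 2 * ε := by
    intro ε hε
    obtain ⟨p, hp, hpa⟩ := happrox ε hε
    have hpt : Tendsto (fun i => p (gA i y)) l (𝓝 (p (g y))) :=
      poly_weak (fun u => hweak y hy u) hp
    have hfa : ∀ i, ‖fext (gA i y) - p (gA i y)‖ ≤ ε := by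
      intro i
      rw [hfe.2 (hgoB i)]
      exact (hpa _ (hgoB i)).le
    have h1 : ‖h y - p (g y)‖ ≤ ε := by
      have hT := ((hlim y hy).sub hpt).norm
      exact le_of_tendsto hT (Eventually.of_forall hfa)
    have h2 : ‖fext (g y) - p (g y)‖ ≤ ε :=
      ext_est hfe (polyGood_of_mem hp).1.continuous (fun z hz => (hpa z hz).le) (g y) hgcB
    calc ‖h y - fext (g y)‖ = ‖(h y - p (g y)) + (p (g y) - fext (g y))‖ := by ring_nf
      _ ≤ ‖h y - p (g y)‖ + ‖p (g y) - fext (g y)‖ := norm_add_le _ _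
      _ ≤ ε + ε := add_le_add h1 (by rw [norm_sub_rev]; exact h2)
      _ = 2 * ε := by ring
  have h0 : ‖h y - fext (g y)‖ ≤ 0 := by
    refine le_of_forall_pos_le_add fun δ hδ => ?_
    have := key (δ/2) (by positivity)
    linarith
  have := le_antisymm h0 (norm_nonneg _)
  rwa [norm_eq_zero, sub_eq_zero] at this

/-! ### Part 2(b): `C_g(f)` lies in the cluster set -/

lemma part2b_mem {f fext : ℓ2 → ℂ} (hfe : IsExt f fext)
    {g : ℓ2 → ℓ2} (hg : MemHinfV g) (hg1 : supNormV g ≤ 1) :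
    InCluster fext g (fun x => fext (g x)) := by
  refine ⟨ℕ, atTop, atTop_neBot, fun k y => ((ck k : ℝ) : ℂ) • g y, ?_, ?_, ?_⟩
  · intro k
    constructor
    · constructor
      · exact hg.1.const_smul ((ck k : ℝ) : ℂ)
      · obtain ⟨C, hC⟩ := hg.2
        refine ⟨max C 0, fun x hx => ?_⟩
        rw [norm_smul]
        have h1 : ‖((ck k : ℝ) : ℂ)‖ ≤ 1 := by
          rw [Complex.norm_real, Real.norm_eq_abs, abs_of_nonneg (ck_mem k).1]
          exact (ck_mem k).2.le
        calc ‖((ck k : ℝ) : ℂ)‖ * ‖g x‖ ≤ 1 * max C 0 := by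
              apply mul_le_mul h1 ((hC x hx).trans (le_max_left _ _)) (norm_nonneg _)
              norm_num
          _ = max C 0 := one_mul _
    · have hle : supNormV (fun y => ((ck k : ℝ) : ℂ) • g y) ≤ ck k := by
        apply supNormV_le
        intro x hx
        rw [norm_smul, Complex.norm_real, Real.norm_eq_abs, abs_of_nonneg (ck_mem k).1]
        have : ‖g x‖ ≤ 1 := (norm_le_supNormV hg.2 hx).trans hg1
        calc ck k * ‖g x‖ ≤ ck k * 1 := mul_le_mul_of_nonneg_left this (ck_mem k).1
          _ = ck k := mul_one _
      exact lt_of_le_of_lt hle (ck_mem k).2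
  · intro y hy u
    have hc : Tendsto (fun k => ((ck k : ℝ) : ℂ)) atTop (𝓝 1) := by
      have := (Complex.continuous_ofReal.tendsto 1).comp tendsto_ck
      simpa [Function.comp_def] using this
    have h1 : Tendsto (fun k => ((ck k : ℝ) : ℂ) * (inner ℂ (g y) u : ℂ)) atTop
        (𝓝 ((inner ℂ (g y) u : ℂ))) := by
      have := hc.mul_const (inner ℂ (g y) u : ℂ)
      simpa using this
    have heq : (fun k => (inner ℂ (((ck k : ℝ) : ℂ) • g y) u : ℂ))
        = fun k => ((ck k : ℝ) : ℂ) * (inner ℂ (g y) u : ℂ) := by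
      funext k
      rw [inner_smul_left, Complex.conj_ofReal]
    rw [heq]
    exact h1
  · intro y hy
    have hgcB : g y ∈ cB := mem_cB_iff.mpr ((norm_le_supNormV hg.2 hy).trans hg1)
    apply (hfe.1 (g y) hgcB).tendsto.comp
    apply tendsto_nhdsWithin_of_tendsto_nhds_of_eventually_within _ (tendsto_scale (g y))
    exact Eventually.of_forall fun k => oB_subset_cB (scale_mem_oB (mem_cB_iff.mp hgcB) k)

lemma part2b_hinf {f fext : ℓ2 → ℂ}
    (happrox : ∀ ε > 0, ∃ p ∈ finTypePolys, ∀ x ∈ oB, ‖f x - p x‖ < ε)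
    (hfe : IsExt f fext) {g : ℓ2 → ℓ2} (hg : MemHinfV g) (hg1 : supNormV g ≤ 1) :
    MemHinf (fun x => fext (g x)) := by
  have hap : ∀ k : ℕ, ∃ p ∈ finTypePolys, ∀ x ∈ oB, ‖f x - p x‖ < 1/((k:ℝ)+1) :=
    fun k => happrox (1/((k:ℝ)+1)) (by positivity)
  choose p hp hpa using hap
  have hgcB : ∀ x ∈ oB, g x ∈ cB := fun x hx =>
    mem_cB_iff.mpr ((norm_le_supNormV hg.2 hx).trans hg1)
  have hext : ∀ k : ℕ, ∀ x ∈ oB, ‖fext (g x) - p k (g x)‖ ≤ 1/((k:ℝ)+1) := fun k x hx =>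
    ext_est hfe (polyGood_of_mem (hp k)).1.continuous (fun z hz => (hpa k z hz).le)
      (g x) (hgcB x hx)
  constructor
  · exact diffOn_of_unif_lim
      (fun k => (polyGood_of_mem (hp k)).1.comp_differentiableOn hg.1) hext
  · obtain ⟨M, hM⟩ := (polyGood_of_mem (hp 0)).2.1
    refine ⟨M + 1, fun x hx => ?_⟩
    have h1 := hext 0 x hx
    have h2 := hM (g x) (hgcB x hx)
    have h3 : ‖fext (g x)‖ ≤ ‖fext (g x) - p 0 (g x)‖ + ‖p 0 (g x)‖ := by
      calc ‖fext (g x)‖ = ‖(fext (g x) - p 0 (g x)) + p 0 (g x)‖ := by ring_nf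
        _ ≤ _ := norm_add_le _ _
    have h1' : ‖fext (g x) - p 0 (g x)‖ ≤ 1 := by simpa using h1
    linarith
/-- if `f ∈ 𝒜ᵤ(B)` is a uniform limit on `B` of finite type polynomials, then
`Φ(f) = C_{ξ(Φ)}(f)` for every `Φ ∈ ℳ_{u,∞}(B,B)`; consequently `𝒞ℓ(f,g) = {C_g(f)}` for
every `g` in the closed unit ball of `ℋ^∞(B,ℓ2)`. -/
theorem stmt17 (f : ℓ2 → ℂ) (hf : MemAu f)
    (happrox : ∀ ε > 0, ∃ p ∈ finTypePolys, ∀ x ∈ oB, ‖f x - p x‖ < ε) :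
    (∀ Φ : MuInfHom, ∀ fext, IsExt f fext → ∀ x ∈ oB,
      ∀ gx : ℓ2, (∀ n : ℕ, gx n = Φ.toFun (coord n) x) → Φ.toFun f x = fext gx) ∧
    (∀ g, MemHinfV g → supNormV g ≤ 1 → ∀ fext, IsExt f fext →
      -- 𝒞ℓ(f,g) ⊆ {C_g(f)}
      (∀ h, MemHinf h → InCluster fext g h → ∀ x ∈ oB, h x = fext (g x)) ∧
      -- C_g(f) ∈ 𝒞ℓ(f,g)
      (MemHinf (fun x => fext (g x)) ∧ InCluster fext g (fun x => fext (g x)))) := by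
  constructor
  · intro Φ fext hfe x hx gx hgxn
    exact part1 hf happrox Φ fext hfe hx gx hgxn
  · intro g hgV hg1 fext hfe
    exact ⟨fun h _ hclu x hx => part2a hfe happrox hgV hg1 hclu x hx,
      part2b_hinf happrox hfe hgV hg1, part2b_mem hfe hgV hg1⟩
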